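/- For a connected graph G of order n, α_bn(G) = n − 1 if and only if G is a path or a generalized spider. -/

import Mathlib

/-!
For every broadcasting vertex `v` choose ray vertices `P v i` at distance `i` from `v`, for
`i ≤ f v` (possible as `f v ≤ e(v)`). Bn-independence makes the vertices `P v i` with `i < f v`
pairwise distinct and distinct from every ray end `P w (f w)`, so the weight is at most `n - 1`.
In case of equality they fill all of `V` except one vertex `e`, which is then the common end of
all rays, and every edge joins two consecutive vertices of a ray. Hence `G` has at most `n - 1`
edges, so it is a tree, and every vertex other than `e` has degree at most `2`.

Conversely, in a tree whose vertices other than `b` have degree at most `2`, let every leaf `ℓ`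
broadcast with strength `d(ℓ, b)`. A path between two leaves avoiding `b` would be closed under
adjacency, hence the whole tree; so it passes through `b`, which makes the broadcast
bn-independent. Every vertex other than `b` lies on the path from `b` to some leaf, so the weight
is at least `n - 1`.
-/

open SimpleGraph Finset
open scoped Classical

noncomputable section

/-- Eccentricity of a vertex. -/
def gecc {V : Type*} (G : SimpleGraph V) [Fintype V] (v : V) : ℕ :=
  Finset.univ.sup fun u => G.dist v u

/-- A broadcast: `f v ≤ e(v)` for all `v`. -/
def IsBroadcast {V : Type*} (G : SimpleGraph V) [Fintype V] (f : V → ℕ) : Prop :=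
  ∀ v, f v ≤ gecc G v

/-- `u` hears `f` from `v`. -/
def Hears {V : Type*} (G : SimpleGraph V) (f : V → ℕ) (u v : V) : Prop :=
  0 < f v ∧ G.dist u v ≤ f v

/-- Boundary independent broadcast: a vertex hearing two or more broadcasting
vertices lies in the boundary of each. -/
def BnIndep {V : Type*} (G : SimpleGraph V) [Fintype V] (f : V → ℕ) : Prop :=
  IsBroadcast G f ∧
    ∀ w v₁ v₂, v₁ ≠ v₂ → Hears G f w v₁ → Hears G f w v₂ → G.dist w v₁ = f v₁

/-- Weight of a broadcast. -/
def bweight {V : Type*} [Fintype V] (f : V → ℕ) : ℕ := ∑ v, f v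

/-- The boundary independence number. -/
def alphaBn {V : Type*} (G : SimpleGraph V) [Fintype V] : ℕ :=
  sSup {w | ∃ f, BnIndep G f ∧ bweight f = w}

/-- Set of branch vertices (degree at least 3). -/
def branchSet {V : Type*} (G : SimpleGraph V) [Fintype V] : Finset V :=
  Finset.univ.filter fun v => 3 ≤ G.degree v

/-- `l` is a leaf joined to `v` by an endpath (all internal vertices of degree 2). -/
def IsEndpathTo {V : Type*} (G : SimpleGraph V) [Fintype V] (v l : V) : Prop :=
  G.degree l = 1 ∧ ∃ p : G.Walk v l, p.IsPath ∧
    ∀ u ∈ p.support, u ≠ v → u ≠ l → G.degree u = 2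

/-- Leaf set `L(v)` of a vertex `v`. -/
def leafSet {V : Type*} (G : SimpleGraph V) [Fintype V] (v : V) : Finset V :=
  Finset.univ.filter fun l => IsEndpathTo G v l

/-- `R(T)`: branch vertices with at most one leaf in their leaf set. -/
def rset {V : Type*} (G : SimpleGraph V) [Fintype V] : Finset V :=
  (branchSet G).filter fun v => (leafSet G v).card ≤ 1

/-- Edge `uv` is covered by broadcasting vertex `x`. -/
def Covers {V : Type*} (G : SimpleGraph V) (f : V → ℕ) (x u v : V) : Prop :=
  0 < f x ∧ G.Adj u v ∧ G.dist u x ≤ f x ∧ G.dist v x ≤ f x ∧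
    (G.dist u x < f x ∨ G.dist v x < f x)

/-- The graph `G - U_f^E` obtained by deleting all `f`-uncovered edges. -/
def coveredSubgraph {V : Type*} (G : SimpleGraph V) (f : V → ℕ) : SimpleGraph V where
  Adj u v := G.Adj u v ∧ ∃ x, Covers G f x u v
  symm := by
    constructor
    rintro u v ⟨h, x, h1, h2, h3, h4, h5⟩
    exact ⟨h.symm, x, h1, h2.symm, h4, h3, h5.symm⟩
  loopless := by constructor; rintro u ⟨h, -⟩; exact G.loopless.irrefl u h

/-- `f` is a maximal bn-independent broadcast. -/
def MaximalBn {V : Type*} (G : SimpleGraph V) [Fintype V] (f : V → ℕ) : Prop :=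
  BnIndep G f ∧ ∀ g, BnIndep G g → (∀ v, f v ≤ g v) → g = f

/-- The `f`-private boundary of `v`: vertices of `N_f(v)` not dominated once the
broadcast strength of `v` is lowered by one. -/
def privBoundary {V : Type*} (G : SimpleGraph V) (f : V → ℕ) (v : V) : Set V :=
  {u | G.dist u v ≤ f v ∧ ∀ x, ¬ Hears G (Function.update f v (f v - 1)) u x}

/-- The branch representation: branch vertices adjacent iff the path between them
contains no other branch vertex. -/
def branchRep {V : Type*} (G : SimpleGraph V) [Fintype V] : SimpleGraph V where
  Adj b₁ b₂ := b₁ ≠ b₂ ∧ 3 ≤ G.degree b₁ ∧ 3 ≤ G.degree b₂ ∧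
    ∀ p : G.Walk b₁ b₂, p.IsPath → ∀ u ∈ p.support, 3 ≤ G.degree u → u = b₁ ∨ u = b₂
  symm := by
    constructor
    rintro a b ⟨hab, ha, hb, h⟩
    refine ⟨hab.symm, hb, ha, fun p hp u hu hdeg => ?_⟩
    have hu' : u ∈ p.reverse.support := by
      rw [SimpleGraph.Walk.support_reverse]; exact List.mem_reverse.mpr hu
    exact (h p.reverse hp.reverse u hu' hdeg).symm
  loopless := by constructor; rintro v ⟨h, -⟩; exact h rfl

/-- Hearing independent broadcast. -/
def HIndep {V : Type*} (G : SimpleGraph V) [Fintype V] (f : V → ℕ) : Prop :=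
  IsBroadcast G f ∧ ∀ u v, u ≠ v → 0 < f u → 0 < f v → f v < G.dist u v

/-- The hearing independence number. -/
def alphaH {V : Type*} (G : SimpleGraph V) [Fintype V] : ℕ :=
  sSup {w | ∃ f, HIndep G f ∧ bweight f = w}

/-- Diameter. -/
def gdiam {V : Type*} (G : SimpleGraph V) [Fintype V] : ℕ :=
  Finset.univ.sup fun v => gecc G v

/-- A path graph: a tree with maximum degree at most 2. -/
def IsPathGraph {V : Type*} (G : SimpleGraph V) [Fintype V] : Prop :=
  G.IsTree ∧ ∀ v, G.degree v ≤ 2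

/-- A generalized spider: a tree with exactly one vertex of degree at least 3. -/
def IsGenSpider {V : Type*} (G : SimpleGraph V) [Fintype V] : Prop :=
  G.IsTree ∧ ∃! b, 3 ≤ G.degree b


namespace SimpleGraph

variable {V : Type*} {G : SimpleGraph V}

lemma IsTree.length_eq_dist (hT : G.IsTree) {u v : V} {p : G.Walk u v} (hp : p.IsPath) :
    p.length = G.dist u v := by
  obtain ⟨q, hq, hql⟩ := hT.connected.exists_path_of_dist u v
  rwa [(hT.existsUnique_path u v).unique hp hq]

lemma IsTree.dist_eq_add_of_mem_support (hT : G.IsTree) {u v w : V} {p : G.Walk u v}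
    (hp : p.IsPath) (hw : w ∈ p.support) : G.dist u v = G.dist u w + G.dist w v := by
  rw [← hT.length_eq_dist hp, ← hT.length_eq_dist (hp.takeUntil hw),
    ← hT.length_eq_dist (hp.dropUntil hw), ← Walk.length_append, Walk.take_spec]

variable [Fintype V]

lemma Connected.exists_dist_eq_of_le_gecc (hG : G.Connected) {v : V} {i : ℕ}
    (hi : i ≤ gecc G v) : ∃ u, G.dist v u = i := by
  have := hG.nonempty
  obtain ⟨u, -, hu⟩ := exists_mem_eq_sup univ univ_nonempty (G.dist v)
  obtain ⟨p, hp⟩ := hG.exists_walk_length_eq_dist v u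
  refine ⟨p.getVert i, ?_⟩
  have := length_eq_dist_of_subwalk hp (p.isSubwalk_take i)
  rw [Walk.take_length] at this
  rw [gecc, hu] at hi
  omega

lemma Walk.IsPath.mem_support_of_degree_le_two (hG : G.Connected) {u v : V} {p : G.Walk u v}
    (hp : p.IsPath) (huv : u ≠ v) (hu : G.degree u = 1) (hv : G.degree v = 1)
    (hdeg : ∀ x ∈ p.support, G.degree x ≤ 2) (z : V) : z ∈ p.support := by
  have hnil : ¬ p.Nil := fun h => huv h.eq
  have hdeg_le : ∀ y ∈ p.support, G.degree y ≤ (p.toSubgraph.neighborSet y).ncard := by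
    intro y hy
    obtain ⟨i, rfl, hi⟩ := Walk.mem_support_iff_exists_getVert.mp hy
    rcases Nat.eq_zero_or_pos i with rfl | hi0
    · rw [Walk.getVert_zero, hp.neighborSet_toSubgraph_startpoint hnil, Set.ncard_singleton, hu]
    rcases hi.eq_or_lt with rfl | hlt
    · rw [Walk.getVert_length, hp.neighborSet_toSubgraph_endpoint hnil, Set.ncard_singleton, hv]
    · rw [hp.ncard_neighborSet_toSubgraph_internal_eq_two hi0.ne' hlt]
      exact hdeg _ hy
  have hclosed : ∀ y ∈ p.support, G.neighborSet y ⊆ p.toSubgraph.neighborSet y := by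
    intro y hy
    refine (Set.eq_of_subset_of_ncard_le (p.toSubgraph.neighborSet_subset y) ?_).superset
    rw [← Nat.card_coe_set_eq, Nat.card_eq_fintype_card, card_neighborSet_eq_degree]
    exact hdeg_le y hy
  by_contra hz
  obtain ⟨d, -, hd₁, hd₂⟩ :=
    (hG u z).some.exists_boundary_dart {x | x ∈ p.support} p.start_mem_support hz
  exact hd₂ ((p.mem_verts_toSubgraph).mp (hclosed _ hd₁ d.adj).snd_mem)

lemma IsTree.dist_eq_add_of_degree_eq_one (hT : G.IsTree) {b ℓ₁ ℓ₂ : V}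
    (hdeg : ∀ x ≠ b, G.degree x ≤ 2) (h₁ : G.degree ℓ₁ = 1) (h₂ : G.degree ℓ₂ = 1)
    (hne : ℓ₁ ≠ ℓ₂) : G.dist ℓ₁ ℓ₂ = G.dist ℓ₁ b + G.dist b ℓ₂ := by
  obtain ⟨p, hp, -⟩ := hT.connected.exists_path_of_dist ℓ₁ ℓ₂
  have hb : b ∈ p.support := by
    by_contra hb
    exact hb (hp.mem_support_of_degree_le_two hT.connected hne h₁ h₂
      (fun x hx => hdeg x (ne_of_mem_of_not_mem hx hb)) b)
  exact hT.dist_eq_add_of_mem_support hp hb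

lemma IsTree.exists_isPath_degree_eq_one (hT : G.IsTree) {b x : V} (hx : x ≠ b) :
    ∃ ℓ, G.degree ℓ = 1 ∧ ∃ p : G.Walk b ℓ, p.IsPath ∧ x ∈ p.support := by
  let IsLength : ℕ → Prop := fun k => ∃ ℓ, ∃ p : G.Walk b ℓ, p.IsPath ∧ x ∈ p.support ∧ p.length = k
  have hbound : ∀ k, IsLength k → k ≤ Fintype.card V := by
    rintro _ ⟨_, p, hp, -, rfl⟩
    exact hp.length_lt.le
  obtain ⟨p₀, hp₀, -⟩ := hT.connected.exists_path_of_dist b x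
  have h₀ : IsLength p₀.length := ⟨x, p₀, hp₀, p₀.end_mem_support, rfl⟩
  obtain ⟨ℓ, p, hp, hxp, hpk⟩ := Nat.findGreatest_spec (hbound _ h₀) h₀
  have hmax : ∀ ℓ' (p' : G.Walk b ℓ'), p'.IsPath → x ∈ p'.support → p'.length ≤ p.length :=
    fun ℓ' p' hp' hxp' => hpk ▸ Nat.le_findGreatest (hbound _ ⟨ℓ', p', hp', hxp', rfl⟩)
      ⟨ℓ', p', hp', hxp', rfl⟩
  have hnil : ¬ p.Nil := fun h => hx (by simpa [Walk.nil_iff_support_eq.mp h] using hxp)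
  -- `p` is a longest such path, so every neighbour of `ℓ` lies on `p`; in a tree it is then
  -- the penultimate vertex
  have hnbr : ∀ w, G.Adj ℓ w → w = p.penultimate := by
    intro w hw
    refine hT.isAcyclic.eq_penultimate_of_adj_end hp hw (by_contra fun hwp => ?_)
    have := hmax _ _ (hp.concat hwp hw) (p.support_subset_support_concat hw hxp)
    rw [Walk.length_concat] at this
    omega
  exact ⟨ℓ, degree_eq_one_iff_existsUnique_adj.mpr ⟨_, (p.adj_penultimate hnil).symm, hnbr⟩,
    p, hp, hxp⟩

end SimpleGraph

section Broadcast

variable {V : Type*} [Fintype V] {G : SimpleGraph V} {f : V → ℕ}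

lemma bnIndep_zero : BnIndep G fun _ => 0 :=
  ⟨fun _ => Nat.zero_le _, fun _ _ _ _ h => absurd h.1 (lt_irrefl 0)⟩

lemma alphaBn_eq_iff_of_bweight_le {N : ℕ} (h : ∀ f, BnIndep G f → bweight f ≤ N) :
    alphaBn G = N ↔ ∃ f, BnIndep G f ∧ bweight f = N := by
  have hne : {w | ∃ f, BnIndep G f ∧ bweight f = w}.Nonempty := ⟨_, _, bnIndep_zero, rfl⟩
  have hbdd : BddAbove {w | ∃ f, BnIndep G f ∧ bweight f = w} :=
    ⟨N, by rintro _ ⟨f, hf, rfl⟩; exact h f hf⟩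
  constructor
  · intro hα
    obtain ⟨f, hf, hfw⟩ := Nat.sSup_mem hne hbdd
    exact ⟨f, hf, hfw.trans hα⟩
  · rintro ⟨f, hf, rfl⟩
    exact le_antisymm (csSup_le hne (by rintro _ ⟨g, hg, rfl⟩; exact h g hg))
      (le_csSup hbdd ⟨f, hf, rfl⟩)

lemma card_sigma_range_eq_bweight (f : V → ℕ) :
    #(univ.sigma fun v => range (f v)) = bweight f := by
  simp [bweight]

lemma IsBroadcast.exists_rays (hf : IsBroadcast G f) (hG : G.Connected) :
    ∃ P : V → ℕ → V, ∀ v i, i ≤ f v → G.dist v (P v i) = i := by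
  have h : ∀ v i, ∃ u, i ≤ f v → G.dist v u = i := by
    intro v i
    by_cases hi : i ≤ f v
    · obtain ⟨u, hu⟩ := hG.exists_dist_eq_of_le_gecc (hi.trans (hf v))
      exact ⟨u, fun _ => hu⟩
    · exact ⟨v, fun h => absurd h hi⟩
  choose P hP using h
  exact ⟨P, hP⟩

namespace BnIndep

variable {P : V → ℕ → V}

lemma eq_of_ray_eq (hf : BnIndep G f) (hP : ∀ v i, i ≤ f v → G.dist v (P v i) = i)
    {v w : V} {i j : ℕ} (hi : i < f v) (hw : 0 < f w) (hj : j ≤ f w) (h : P v i = P w j) :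
    v = w ∧ i = j := by
  have hvi := hP v i hi.le
  have hwj := hP w j hj
  by_cases hvw : v = w
  · subst hvw
    rw [h] at hvi
    exact ⟨rfl, hvi.symm.trans hwj⟩
  · have := hf.2 (P v i) v w hvw ⟨by omega, by rw [G.dist_comm, hvi]; omega⟩
      ⟨hw, by rw [G.dist_comm, h, hwj]; exact hj⟩
    rw [G.dist_comm, hvi] at this
    omega

lemma injOn_ray (hf : BnIndep G f) (hP : ∀ v i, i ≤ f v → G.dist v (P v i) = i) :
    Set.InjOn (fun s : Σ _ : V, ℕ => P s.1 s.2) ↑(univ.sigma fun v => range (f v)) := by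
  rintro ⟨v, i⟩ hs ⟨w, j⟩ ht h
  simp only [mem_coe, mem_sigma, mem_univ, mem_range, true_and] at hs ht
  obtain ⟨rfl, rfl⟩ := hf.eq_of_ray_eq hP hs (by omega) ht.le h
  rfl

lemma mapsTo_ray (hf : BnIndep G f) (hP : ∀ v i, i ≤ f v → G.dist v (P v i) = i) {w : V}
    (hw : 0 < f w) : Set.MapsTo (fun s : Σ _ : V, ℕ => P s.1 s.2)
      ↑(univ.sigma fun v => range (f v)) ↑(univ.erase (P w (f w))) := by
  rintro ⟨v, i⟩ hs
  simp only [mem_coe, mem_sigma, mem_univ, mem_range, true_and] at hs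
  simp only [mem_coe, mem_erase, mem_univ, and_true]
  intro h
  obtain ⟨rfl, rfl⟩ := hf.eq_of_ray_eq hP hs hw le_rfl h
  exact lt_irrefl _ hs

lemma bweight_le (hf : BnIndep G f) (hG : G.Connected) : bweight f ≤ Fintype.card V - 1 := by
  obtain ⟨P, hP⟩ := hf.1.exists_rays hG
  by_cases h : ∃ w, 0 < f w
  · obtain ⟨w, hw⟩ := h
    rw [← card_sigma_range_eq_bweight, ← card_univ, ← card_erase_of_mem (mem_univ (P w (f w)))]
    exact card_le_card_of_injOn _ (hf.mapsTo_ray hP hw) (hf.injOn_ray hP)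
  · simp only [not_exists, not_lt] at h
    simp [bweight, fun v => Nat.le_zero.mp (h v)]

lemma exists_common_end (hf : BnIndep G f) (hG : G.Connected)
    (hP : ∀ v i, i ≤ f v → G.dist v (P v i) = i) (hw : bweight f = Fintype.card V - 1) :
    ∃ e, (∀ v, 0 < f v → P v (f v) = e) ∧ ∀ x ≠ e, ∃ v i, i < f v ∧ P v i = x := by
  by_cases h : ∃ w, 0 < f w
  · obtain ⟨w, hw₀⟩ := h
    have hsurj : ∀ x ≠ P w (f w), ∃ v i, i < f v ∧ P v i = x := by
      intro x hx
      obtain ⟨⟨v, i⟩, hs, rfl⟩ := surjOn_of_injOn_of_card_le _ (hf.mapsTo_ray hP hw₀)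
        (hf.injOn_ray hP) (by rw [card_sigma_range_eq_bweight, hw, card_erase_of_mem
          (mem_univ _), card_univ]) (mem_erase.mpr ⟨hx, mem_univ x⟩)
      simp only [mem_coe, mem_sigma, mem_univ, mem_range, true_and] at hs
      exact ⟨v, i, hs, rfl⟩
    refine ⟨P w (f w), fun v hv => by_contra fun hne => ?_, hsurj⟩
    obtain ⟨u, i, hi, hPu⟩ := hsurj _ hne
    obtain ⟨rfl, rfl⟩ := hf.eq_of_ray_eq hP hi hv le_rfl hPu
    exact lt_irrefl _ hi
  · simp only [not_exists, not_lt, Nat.le_zero] at h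
    have hV : Fintype.card V ≤ 1 := by simp [bweight, h] at hw; omega
    obtain ⟨e⟩ := hG.nonempty
    exact ⟨e, fun v hv => absurd (h v) hv.ne', fun x hx =>
      absurd (Fintype.card_le_one_iff.mp hV x e) hx⟩

section CommonEnd

variable (hG : G.Connected) (hf : BnIndep G f) (hP : ∀ v i, i ≤ f v → G.dist v (P v i) = i)
  {e : V} (hend : ∀ v, 0 < f v → P v (f v) = e) (hsurj : ∀ x ≠ e, ∃ v i, i < f v ∧ P v i = x)
include hG hf hP hend hsurj

lemma eq_ray_of_adj {v : V} {p : ℕ} {y : V} (hp : p < f v) (hadj : G.Adj (P v p) y) :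
    y = P v (p + 1) ∨ ∃ q, q + 1 = p ∧ y = P v q := by
  have hv : 0 < f v := by omega
  have hdp := hP v p hp.le
  have htri : G.dist v y ≤ G.dist v (P v p) + 1 :=
    dist_eq_one_iff_adj.mpr hadj ▸ hG.dist_triangle
  by_cases hy : y = e
  · subst hy
    have hde : G.dist v y = f v := by rw [← hend v hv]; exact hP v _ le_rfl
    left
    rw [← hend v hv]
    congr 1
    omega
  obtain ⟨w, q, hq, rfl⟩ := hsurj y hy
  have hwq := hP w q hq.le
  have hvw : v = w := by
    by_contra hvw
    have hw : G.dist (P v p) w ≤ q + 1 := by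
      have := hG.dist_triangle (u := P v p) (v := P w q) (w := w)
      rw [dist_eq_one_iff_adj.mpr hadj, G.dist_comm (u := P w q), hwq] at this
      omega
    have := hf.2 (P v p) v w hvw ⟨hv, by rw [G.dist_comm, hdp]; omega⟩ ⟨by omega, by omega⟩
    rw [G.dist_comm, hdp] at this
    omega
  subst hvw
  have hpq : p ≠ q := fun h => hadj.ne (by rw [h])
  have := hG.dist_triangle (u := v) (v := P v q) (w := P v p)
  rw [dist_eq_one_iff_adj.mpr hadj.symm] at this
  rcases lt_or_gt_of_ne hpq with h | h
  · exact Or.inl (by congr 1; omega)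
  · exact Or.inr ⟨q, by omega, rfl⟩

lemma degree_le_two_of_rays_cover {x : V} (hx : x ≠ e) : G.degree x ≤ 2 := by
  obtain ⟨v, p, hp, rfl⟩ := hsurj x hx
  calc G.degree (P v p) ≤ #{P v (p + 1), P v (p - 1)} := by
        rw [← card_neighborFinset_eq_degree]
        refine card_le_card fun y hy => ?_
        rcases eq_ray_of_adj hG hf hP hend hsurj hp (mem_neighborFinset _ _ _ |>.mp hy) with
          rfl | ⟨q, rfl, rfl⟩ <;> simp
    _ ≤ 2 := card_le_two

lemma isTree_of_rays_cover : G.IsTree := by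
  have hedge : G.edgeFinset ⊆ (univ.sigma fun v => range (f v)).image
      fun s => s(P s.1 s.2, P s.1 (s.2 + 1)) := by
    have key : ∀ x y, x ≠ e → G.Adj x y →
        ∃ v q, q < f v ∧ s(P v q, P v (q + 1)) = s(x, y) := by
      intro x y hx hadj
      obtain ⟨v, p, hp, rfl⟩ := hsurj x hx
      rcases eq_ray_of_adj hG hf hP hend hsurj hp hadj with rfl | ⟨q, rfl, rfl⟩
      · exact ⟨v, p, hp, rfl⟩
      · exact ⟨v, q, by omega, Sym2.eq_swap⟩
    refine Sym2.ind fun x y hd => ?_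
    rw [mem_edgeFinset, mem_edgeSet] at hd
    obtain ⟨v, q, hq, hvq⟩ : ∃ v q, q < f v ∧ s(P v q, P v (q + 1)) = s(x, y) := by
      by_cases hx : x = e
      · obtain ⟨v, q, hq, h⟩ := key y x (hx ▸ hd.ne.symm) hd.symm
        exact ⟨v, q, hq, h.trans Sym2.eq_swap⟩
      · exact key x y hx hd
    exact mem_image.mpr ⟨⟨v, q⟩, by simpa using hq, hvq⟩
  have hV : 0 < Fintype.card V := Fintype.card_pos_iff.mpr hG.nonempty
  have hcard : #G.edgeFinset ≤ Fintype.card V - 1 :=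
    calc #G.edgeFinset ≤ #(univ.sigma fun v => range (f v)) :=
          (card_le_card hedge).trans card_image_le
      _ ≤ Fintype.card V - 1 := (card_sigma_range_eq_bweight f).trans_le (hf.bweight_le hG)
  rw [isTree_iff_connected_and_card]
  refine ⟨hG, le_antisymm ?_ hG.card_vert_le_card_edgeSet_add_one⟩
  rw [Nat.card_eq_fintype_card, ← edgeFinset_card, Nat.card_eq_fintype_card]
  omega

end CommonEnd

lemma isTree_and_degree_le_two (hf : BnIndep G f) (hG : G.Connected)
    (hw : bweight f = Fintype.card V - 1) : G.IsTree ∧ ∃ e, ∀ x ≠ e, G.degree x ≤ 2 := by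
  obtain ⟨P, hP⟩ := hf.1.exists_rays hG
  obtain ⟨e, hend, hsurj⟩ := hf.exists_common_end hG hP hw
  exact ⟨isTree_of_rays_cover hG hf hP hend hsurj, e,
    fun _ => degree_le_two_of_rays_cover hG hf hP hend hsurj⟩

end BnIndep

end Broadcast

section LeafBroadcast

variable {V : Type*} [Fintype V] {G : SimpleGraph V}

-- `b` is silent even when it is a leaf, since `G.dist b b = 0`
def leafBroadcast (G : SimpleGraph V) (b : V) : V → ℕ :=
  fun x => if G.degree x = 1 then G.dist x b else 0

lemma SimpleGraph.IsTree.bnIndep_leafBroadcast (hT : G.IsTree) {b : V}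
    (hdeg : ∀ x ≠ b, G.degree x ≤ 2) : BnIndep G (leafBroadcast G b) := by
  have hleaf : ∀ v, 0 < leafBroadcast G b v →
      G.degree v = 1 ∧ leafBroadcast G b v = G.dist v b := by
    intro v hv
    unfold leafBroadcast at hv ⊢
    split_ifs at hv ⊢ with h
    exacts [⟨h, rfl⟩, absurd hv (lt_irrefl 0)]
  refine ⟨fun v => ?_, fun w v₁ v₂ hne h₁ h₂ => ?_⟩
  · unfold leafBroadcast
    split_ifs
    exacts [le_sup (f := G.dist v) (mem_univ b), Nat.zero_le _]
  · obtain ⟨hd₁, hf₁⟩ := hleaf v₁ h₁.1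
    obtain ⟨hd₂, hf₂⟩ := hleaf v₂ h₂.1
    have hsum := hT.dist_eq_add_of_degree_eq_one hdeg hd₁ hd₂ hne
    have htri := hT.connected.dist_triangle (u := v₁) (v := w) (w := v₂)
    have h₁' : G.dist w v₁ ≤ G.dist v₁ b := hf₁ ▸ h₁.2
    have h₂' : G.dist w v₂ ≤ G.dist v₂ b := hf₂ ▸ h₂.2
    rw [hf₁]
    rw [G.dist_comm (u := v₁) (v := w)] at htri
    rw [G.dist_comm (u := b)] at hsum
    omega

lemma SimpleGraph.IsTree.card_sub_one_le_bweight_leafBroadcast (hT : G.IsTree) (b : V) :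
    Fintype.card V - 1 ≤ bweight (leafBroadcast G b) := by
  choose q hq using hT.existsUnique_path b
  have hcover : univ.erase b ⊆ (univ.filter fun ℓ => G.degree ℓ = 1).biUnion
      fun ℓ => (q ℓ).support.toFinset.erase b := by
    intro x hx
    obtain ⟨ℓ, hℓ, p, hp, hxp⟩ := hT.exists_isPath_degree_eq_one (ne_of_mem_erase hx)
    simp only [mem_biUnion, mem_filter, mem_univ, true_and, mem_erase, List.mem_toFinset]
    exact ⟨ℓ, hℓ, ne_of_mem_erase hx, (hq ℓ).2 p hp ▸ hxp⟩
  calc Fintype.card V - 1 = #(univ.erase b) := by rw [card_erase_of_mem (mem_univ _), card_univ]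
    _ ≤ ∑ ℓ ∈ univ.filter (fun ℓ => G.degree ℓ = 1), #((q ℓ).support.toFinset.erase b) :=
      (card_le_card hcover).trans card_biUnion_le
    _ = ∑ ℓ ∈ univ.filter (fun ℓ => G.degree ℓ = 1), G.dist ℓ b := by
      refine sum_congr rfl fun ℓ _ => ?_
      rw [card_erase_of_mem (List.mem_toFinset.mpr (q ℓ).start_mem_support),
        List.toFinset_card_of_nodup (hq ℓ).1.support_nodup, Walk.length_support,
        add_tsub_cancel_right, hT.length_eq_dist (hq ℓ).1, G.dist_comm]
    _ = bweight (leafBroadcast G b) := by rw [bweight, sum_filter]; rfl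

end LeafBroadcast

lemma isPathGraph_or_isGenSpider_iff {V : Type*} [Fintype V] [Nonempty V] {G : SimpleGraph V} :
    IsPathGraph G ∨ IsGenSpider G ↔ G.IsTree ∧ ∃ b, ∀ x ≠ b, G.degree x ≤ 2 := by
  constructor
  · rintro (⟨hT, hdeg⟩ | ⟨hT, b, -, hb⟩)
    · exact ⟨hT, Classical.arbitrary V, fun x _ => hdeg x⟩
    · exact ⟨hT, b, fun x hx => by by_contra h; exact hx (hb x (by omega))⟩
  · rintro ⟨hT, b, hb⟩
    have hb' : ∀ y, 3 ≤ G.degree y → y = b := fun y hy => by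
      by_contra h
      have := hb y h
      omega
    by_cases h : ∃ x, 3 ≤ G.degree x
    · obtain ⟨x, hx⟩ := h
      exact Or.inr ⟨hT, x, hx, fun y hy => (hb' y hy).trans (hb' x hx).symm⟩
    · simp only [not_exists, not_le] at h
      exact Or.inl ⟨hT, fun v => by have := h v; omega⟩

/-- For a connected graph `G` of order `n`, `α_bn(G) = n - 1` iff `G` is a path
or a generalized spider. -/
theorem stmt4 {V : Type*} [Fintype V] (G : SimpleGraph V) (hG : G.Connected) :
    alphaBn G = Fintype.card V - 1 ↔ IsPathGraph G ∨ IsGenSpider G := by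
  have := hG.nonempty
  rw [alphaBn_eq_iff_of_bweight_le fun f hf => hf.bweight_le hG, isPathGraph_or_isGenSpider_iff]
  constructor
  · rintro ⟨f, hf, hw⟩
    exact hf.isTree_and_degree_le_two hG hw
  · rintro ⟨hT, b, hb⟩
    have hf := hT.bnIndep_leafBroadcast hb
    exact ⟨leafBroadcast G b, hf,
      le_antisymm (hf.bweight_le hG) (hT.card_sub_one_le_bweight_leafBroadcast b)⟩
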